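/- Let D and D̃ be dictionaries, let z* be a minimizer of the LASSO objective for D at x and t* a minimizer of the LASSO objective for D̃ at x, and suppose ‖z* − t*‖_0 ≤ k. Then (z* − t*)ᵀ DᵀD (z* − t*) ≤ (4 ‖x‖_2² / λ) · ‖D − D̃‖_{1,2} · √k · ‖z* − t*‖_2. -/

import Mathlib

open Finset Matrix

noncomputable def norm2 {ι : Type*} [Fintype ι] (v : ι → ℝ) : ℝ :=
  Real.sqrt (∑ i, v i ^ 2)

noncomputable def norm1 {ι : Type*} [Fintype ι] (v : ι → ℝ) : ℝ :=
  ∑ i, |v i|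

noncomputable def norm0 {ι : Type*} (v : ι → ℝ) : ℕ :=
  Set.ncard {i | v i ≠ 0}

noncomputable def dot {ι : Type*} [Fintype ι] (u v : ι → ℝ) : ℝ :=
  ∑ i, u i * v i

def col {d m : ℕ} (D : Matrix (Fin d) (Fin m) ℝ) (i : Fin m) : Fin d → ℝ :=
  fun r => D r i

def IsDictionary {d m : ℕ} (D : Matrix (Fin d) (Fin m) ℝ) : Prop :=
  ∀ i, norm2 (_root_.col D i) = 1

noncomputable def norm12 {d m : ℕ} (E : Matrix (Fin d) (Fin m) ℝ) : ℝ :=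
  ⨆ i : Fin m, norm2 (_root_.col E i)

noncomputable def lassoObj {d m : ℕ} (lam : ℝ) (D : Matrix (Fin d) (Fin m) ℝ)
    (x : Fin d → ℝ) (z : Fin m → ℝ) : ℝ :=
  (1/2) * (norm2 (x - D.mulVec z))^2 + lam * norm1 z

def IsLassoMin {d m : ℕ} (lam : ℝ) (D : Matrix (Fin d) (Fin m) ℝ)
    (x : Fin d → ℝ) (a : Fin m → ℝ) : Prop :=
  ∀ z, lassoObj lam D x a ≤ lassoObj lam D x z

def Incoherent {d m : ℕ} (mu : ℝ) (D : Matrix (Fin d) (Fin m) ℝ) : Prop :=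
  ∀ i j, i ≠ j → |dot (_root_.col D i) (_root_.col D j)| ≤ mu / Real.sqrt d

noncomputable def kMargin {d m : ℕ} (lam : ℝ) (k : ℕ) (D : Matrix (Fin d) (Fin m) ℝ)
    (x : Fin d → ℝ) (a : Fin m → ℝ) : ℝ :=
  ⨆ I : {I : Finset (Fin m) // I.card = m - k},
    ⨅ j : {j : Fin m // j ∈ I.1}, (lam - |dot (_root_.col D j.1) (x - D.mulVec a)|)

/-!
Write `u = z - t` and `E = D - Dt`. The first-order optimality inequalities of the two LASSO
problems, tested in the directions `-u` and `u`, add up with their `ℓ₁` terms cancelling to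
`⟪Dz - x, Du⟫ ≤ ⟪Dt t - x, Dt u⟫`. Substituting `D = Dt + E`, what remains of `‖Du‖²` is a sum of
inner products each containing `Eu` or `Et`, and `‖E w‖₂ ≤ ‖E‖_{1,2} ‖w‖₁`. Comparing with the
objective at `0` gives `λ ‖t‖₁ ≤ ‖x‖² / 2`, and, for unit-norm columns, `λ ≤ ‖x‖` as soon as a
minimizer is nonzero. Finally `‖u‖₁ ≤ √k ‖u‖₂` by Cauchy–Schwarz on the support of `u`.
-/

open Filter Topology

section Vectors

variable {ι : Type*} [Fintype ι]

lemma norm2_eq_norm (v : ι → ℝ) : norm2 v = ‖WithLp.toLp 2 v‖ := by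
  simp [norm2, EuclideanSpace.norm_eq]

lemma norm1_eq_norm (v : ι → ℝ) : norm1 v = ‖WithLp.toLp 1 v‖ := by
  simp [norm1, PiLp.norm_eq_of_L1]

lemma dot_eq_inner (u v : ι → ℝ) :
    dot u v = inner ℝ (WithLp.toLp 2 u) (WithLp.toLp 2 v) := by
  simp [dot, PiLp.inner_apply, mul_comm]

lemma dot_eq_dotProduct (u v : ι → ℝ) : dot u v = u ⬝ᵥ v := rfl

lemma norm2_nonneg (v : ι → ℝ) : 0 ≤ norm2 v := Real.sqrt_nonneg _

lemma norm1_nonneg (v : ι → ℝ) : 0 ≤ norm1 v := by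
  rw [norm1_eq_norm]; exact norm_nonneg _

lemma norm1_zero : norm1 (0 : ι → ℝ) = 0 := by
  simp [norm1]

lemma norm1_pos {v : ι → ℝ} (hv : v ≠ 0) : 0 < norm1 v := by
  rw [norm1_eq_norm, norm_pos_iff]
  exact fun h => hv (WithLp.toLp_injective 1 h)

lemma abs_dot_le (u v : ι → ℝ) : |dot u v| ≤ norm2 u * norm2 v := by
  rw [dot_eq_inner, norm2_eq_norm, norm2_eq_norm]
  exact abs_real_inner_le_norm _ _

lemma abs_dot_le_of_norm2_le {u v : ι → ℝ} {a b : ℝ} (hu : norm2 u ≤ a)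
    (hv : norm2 v ≤ b) : |dot u v| ≤ a * b :=
  (abs_dot_le u v).trans (mul_le_mul hu hv (norm2_nonneg v) ((norm2_nonneg u).trans hu))

lemma norm2_sub_sq (u v : ι → ℝ) :
    norm2 (u - v) ^ 2 = norm2 u ^ 2 - 2 * dot u v + norm2 v ^ 2 := by
  rw [dot_eq_inner, norm2_eq_norm, norm2_eq_norm, norm2_eq_norm, WithLp.toLp_sub]
  exact norm_sub_sq_real _ _

lemma norm2_smul (s : ℝ) (v : ι → ℝ) : norm2 (s • v) = |s| * norm2 v := by
  rw [norm2_eq_norm, norm2_eq_norm, WithLp.toLp_smul, norm_smul, Real.norm_eq_abs]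

lemma norm1_add_smul_le {s : ℝ} (hs₀ : 0 ≤ s) (hs₁ : s ≤ 1) (u v : ι → ℝ) :
    norm1 (u + s • v) ≤ (1 - s) * norm1 u + s * norm1 (u + v) := by
  have hconv : u + s • v = (1 - s) • u + s • (u + v) := by
    rw [smul_add, sub_smul, one_smul]; abel
  simp only [hconv, norm1_eq_norm, WithLp.toLp_add, WithLp.toLp_smul]
  refine (norm_add_le _ _).trans_eq ?_
  rw [norm_smul, norm_smul, Real.norm_of_nonneg (sub_nonneg.2 hs₁), Real.norm_of_nonneg hs₀]

lemma norm1_le_sqrt_norm0_mul_norm2 (v : ι → ℝ) :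
    norm1 v ≤ Real.sqrt (norm0 v) * norm2 v := by
  classical
  set S := Finset.univ.filter (fun i => v i ≠ 0)
  have hcard : norm0 v = S.card := by
    rw [norm0, ← Set.ncard_coe_finset]; congr 1; ext; simp [S]
  have hsum_abs : norm1 v = ∑ i ∈ S, |v i| :=
    (Finset.sum_subset (Finset.subset_univ S) fun i _ hi => by simp_all [S]).symm
  have hsum_sq : ∑ i ∈ S, v i ^ 2 ≤ norm2 v ^ 2 := by
    rw [norm2, Real.sq_sqrt (by positivity)]
    exact Finset.sum_le_sum_of_subset_of_nonneg (Finset.subset_univ S) fun _ _ _ => sq_nonneg _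
  have hcs : norm1 v ^ 2 ≤ (S.card : ℝ) * ∑ i ∈ S, v i ^ 2 := by
    simpa [hsum_abs] using Finset.sum_mul_sq_le_sq_mul_sq S (fun _ => (1 : ℝ)) (fun i => |v i|)
  refine le_of_pow_le_pow_left₀ two_ne_zero (mul_nonneg (Real.sqrt_nonneg _) (norm2_nonneg v)) ?_
  rw [mul_pow, Real.sq_sqrt (Nat.cast_nonneg _), hcard]
  exact hcs.trans (mul_le_mul_of_nonneg_left hsum_sq (Nat.cast_nonneg _))

lemma norm1_le_sqrt_mul_norm2_of_norm0_le {v : ι → ℝ} {k : ℕ} (hk : norm0 v ≤ k) :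
    norm1 v ≤ Real.sqrt k * norm2 v :=
  (norm1_le_sqrt_norm0_mul_norm2 v).trans <|
    mul_le_mul_of_nonneg_right (Real.sqrt_le_sqrt (by exact_mod_cast hk)) (norm2_nonneg v)

end Vectors

section Matrices

variable {d m : ℕ}

lemma mulVec_eq_sum_smul_col (E : Matrix (Fin d) (Fin m) ℝ) (v : Fin m → ℝ) :
    E *ᵥ v = ∑ i, v i • _root_.col E i := by
  ext r
  simp [Matrix.mulVec, dotProduct, _root_.col, Finset.sum_apply, mul_comm]

lemma norm2_mulVec_le_of_norm2_col_le {E : Matrix (Fin d) (Fin m) ℝ} {c : ℝ}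
    (hc : ∀ i, norm2 (_root_.col E i) ≤ c) (v : Fin m → ℝ) :
    norm2 (E *ᵥ v) ≤ c * norm1 v := by
  rw [mulVec_eq_sum_smul_col, norm2_eq_norm, WithLp.toLp_sum, norm1, Finset.mul_sum]
  refine (norm_sum_le _ _).trans (Finset.sum_le_sum fun i _ => ?_)
  rw [WithLp.toLp_smul, norm_smul, Real.norm_eq_abs, ← norm2_eq_norm, mul_comm c]
  exact mul_le_mul_of_nonneg_left (hc i) (abs_nonneg _)

lemma norm2_col_le_norm12 (E : Matrix (Fin d) (Fin m) ℝ) (i : Fin m) :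
    norm2 (_root_.col E i) ≤ norm12 E :=
  le_ciSup (f := fun j => norm2 (_root_.col E j)) (Set.finite_range _).bddAbove i

lemma norm12_nonneg (E : Matrix (Fin d) (Fin m) ℝ) : 0 ≤ norm12 E :=
  Real.iSup_nonneg fun _ => norm2_nonneg _

lemma norm2_mulVec_le_norm12_mul_norm1 (E : Matrix (Fin d) (Fin m) ℝ) (v : Fin m → ℝ) :
    norm2 (E *ᵥ v) ≤ norm12 E * norm1 v :=
  norm2_mulVec_le_of_norm2_col_le (norm2_col_le_norm12 E) v

lemma IsDictionary.norm2_mulVec_le {D : Matrix (Fin d) (Fin m) ℝ} (hD : IsDictionary D)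
    (v : Fin m → ℝ) : norm2 (D *ᵥ v) ≤ norm1 v := by
  simpa using norm2_mulVec_le_of_norm2_col_le (fun i => (hD i).le) v

end Matrices

lemma nonneg_of_forall_add_mul_nonneg {c a : ℝ}
    (h : ∀ s ∈ Set.Ioc (0 : ℝ) 1, 0 ≤ c + s * a) : 0 ≤ c := by
  have hlim : Tendsto (fun s => c + s * a) (𝓝[>] 0) (𝓝 c) := by
    have : Continuous fun s : ℝ => c + s * a := by fun_prop
    simpa using (this.tendsto 0).mono_left nhdsWithin_le_nhds
  exact ge_of_tendsto hlim (eventually_of_mem (Ioc_mem_nhdsGT one_pos) h)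

namespace IsLassoMin

variable {d m : ℕ} {lam : ℝ} {D Dt : Matrix (Fin d) (Fin m) ℝ} {x : Fin d → ℝ}
  {z t : Fin m → ℝ}

lemma lam_mul_norm1_le (hz : IsLassoMin lam D x z) : lam * norm1 z ≤ norm2 x ^ 2 / 2 := by
  have h := hz 0
  simp only [lassoObj, Matrix.mulVec_zero, sub_zero, norm1_zero, mul_zero, add_zero] at h
  nlinarith [sq_nonneg (norm2 (x - D *ᵥ z))]

lemma lam_le_norm2_of_ne_zero (hD : IsDictionary D) (hz : IsLassoMin lam D x z) (hz₀ : z ≠ 0) :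
    lam ≤ norm2 x := by
  have h := hz 0
  simp only [lassoObj, norm2_sub_sq, Matrix.mulVec_zero, sub_zero, norm1_zero, mul_zero,
    add_zero] at h
  have hcs : dot x (D *ᵥ z) ≤ norm2 x * norm1 z :=
    (le_abs_self _).trans (abs_dot_le_of_norm2_le le_rfl (hD.norm2_mulVec_le z))
  refine le_of_mul_le_mul_right ?_ (norm1_pos hz₀)
  nlinarith [sq_nonneg (norm2 (D *ᵥ z))]

theorem variational (hlam : 0 ≤ lam) (hz : IsLassoMin lam D x z) (v : Fin m → ℝ) :
    0 ≤ dot (D *ᵥ z - x) (D *ᵥ v) + lam * (norm1 (z + v) - norm1 z) := by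
  -- Convexity of the ℓ₁ term bounds the objective along `z + s • v` by a quadratic in `s`
  -- whose linear coefficient is the claimed quantity; minimality at `s = 0` forces it `≥ 0`.
  refine nonneg_of_forall_add_mul_nonneg (a := norm2 (D *ᵥ v) ^ 2 / 2)
    fun s ⟨hs₀, hs₁⟩ => ?_
  have hobj : lassoObj lam D x (z + s • v) = norm2 (x - D *ᵥ z) ^ 2 / 2
      - s * dot (x - D *ᵥ z) (D *ᵥ v) + s ^ 2 * norm2 (D *ᵥ v) ^ 2 / 2
      + lam * norm1 (z + s • v) := by
    rw [lassoObj, Matrix.mulVec_add, Matrix.mulVec_smul, ← sub_sub, norm2_sub_sq, norm2_smul,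
      dot_eq_dotProduct, dot_eq_dotProduct, dotProduct_smul, smul_eq_mul, mul_pow, sq_abs]
    ring
  have hres : dot (D *ᵥ z - x) (D *ᵥ v) = -dot (x - D *ᵥ z) (D *ᵥ v) := by
    rw [dot_eq_dotProduct, dot_eq_dotProduct, ← neg_dotProduct, neg_sub]
  have hmin := hz (z + s • v)
  rw [hobj, lassoObj] at hmin
  have hconv := mul_le_mul_of_nonneg_left (norm1_add_smul_le hs₀.le hs₁ z v) hlam
  refine nonneg_of_mul_nonneg_right ?_ hs₀
  rw [hres]
  nlinarith

lemma dot_residual_le (hlam : 0 ≤ lam) (hz : IsLassoMin lam D x z) (ht : IsLassoMin lam Dt x t) :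
    dot (D *ᵥ z - x) (D *ᵥ (z - t)) ≤ dot (Dt *ᵥ t - x) (Dt *ᵥ (z - t)) := by
  have hzt := hz.variational hlam (t - z)
  have htz := ht.variational hlam (z - t)
  rw [add_sub_cancel, ← neg_sub z t, Matrix.mulVec_neg, dot_eq_dotProduct, dotProduct_neg,
    ← dot_eq_dotProduct] at hzt
  rw [add_sub_cancel] at htz
  linarith

end IsLassoMin

lemma dot_mulVec_sub_le_norm12_mul_norm1 {d m : ℕ} {lam : ℝ} (hlam : 0 ≤ lam)
    {D Dt : Matrix (Fin d) (Fin m) ℝ} (hD : IsDictionary D) (hDt : IsDictionary Dt)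
    {x : Fin d → ℝ} {z t : Fin m → ℝ} (hz : IsLassoMin lam D x z)
    (ht : IsLassoMin lam Dt x t) :
    dot (D *ᵥ (z - t)) (D *ᵥ (z - t))
      ≤ norm12 (D - Dt) * norm1 (z - t) * (norm2 x + 2 * norm1 t) := by
  set u := z - t
  set E := D - Dt
  have hsplit : dot (D *ᵥ u) (D *ᵥ u)
      = (dot (D *ᵥ z - x) (D *ᵥ u) - dot (Dt *ᵥ t - x) (Dt *ᵥ u))
        + dot x (E *ᵥ u) - dot (Dt *ᵥ t) (E *ᵥ u) - dot (E *ᵥ t) (D *ᵥ u) := by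
    simp only [u, E, dot_eq_dotProduct, Matrix.mulVec_sub, Matrix.sub_mulVec, dotProduct_sub,
      sub_dotProduct]
    ring
  have hEu := norm2_mulVec_le_norm12_mul_norm1 E u
  have hEt := norm2_mulVec_le_norm12_mul_norm1 E t
  have hx := abs_dot_le_of_norm2_le (u := x) le_rfl hEu
  have hDtt := abs_dot_le_of_norm2_le (hDt.norm2_mulVec_le t) hEu
  have hDu := abs_dot_le_of_norm2_le hEt (hD.norm2_mulVec_le u)
  have hres := hz.dot_residual_le hlam ht
  rw [hsplit]
  linarith [le_abs_self (dot x (E *ᵥ u)), neg_abs_le (dot (Dt *ᵥ t) (E *ᵥ u)),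
    neg_abs_le (dot (E *ᵥ t) (D *ᵥ u))]

theorem lasso_quadratic_form_bound {d m : ℕ} (lam : ℝ) (hlam : 0 < lam) (k : ℕ)
    (D Dt : Matrix (Fin d) (Fin m) ℝ) (hD : IsDictionary D) (hDt : IsDictionary Dt)
    (x : Fin d → ℝ) (z t : Fin m → ℝ)
    (hz : IsLassoMin lam D x z) (ht : IsLassoMin lam Dt x t)
    (hsparse : norm0 (z - t) ≤ k) :
    dot (D.mulVec (z - t)) (D.mulVec (z - t))
      ≤ (4 * (norm2 x)^2 / lam) * norm12 (D - Dt) * Real.sqrt k * norm2 (z - t) := by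
  obtain rfl | hzt := eq_or_ne z t
  · simp [dot, norm2]
  have hlam_le : lam ≤ norm2 x := by
    by_cases hz₀ : z = 0
    · exact ht.lam_le_norm2_of_ne_zero hDt (hz₀ ▸ hzt.symm)
    · exact hz.lam_le_norm2_of_ne_zero hD hz₀
  have hx : norm2 x ≤ norm2 x ^ 2 / lam := by
    rw [le_div_iff₀ hlam, sq]
    exact mul_le_mul_of_nonneg_left hlam_le (norm2_nonneg x)
  have ht₁ : 2 * norm1 t ≤ norm2 x ^ 2 / lam := by
    rw [le_div_iff₀ hlam]
    linarith [ht.lam_mul_norm1_le]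
  have hε := norm12_nonneg (D - Dt)
  have hν := norm2_nonneg (z - t)
  calc dot (D *ᵥ (z - t)) (D *ᵥ (z - t))
      ≤ norm12 (D - Dt) * norm1 (z - t) * (norm2 x + 2 * norm1 t) :=
        dot_mulVec_sub_le_norm12_mul_norm1 hlam.le hD hDt hz ht
    _ ≤ norm12 (D - Dt) * (Real.sqrt k * norm2 (z - t)) * (4 * (norm2 x ^ 2 / lam)) :=
        mul_le_mul (mul_le_mul_of_nonneg_left (norm1_le_sqrt_mul_norm2_of_norm0_le hsparse) hε)
          (by linarith) (by linarith [norm2_nonneg x, norm1_nonneg t]) (by positivity)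
    _ = _ := by ring
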